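/- For every natural number n, every real k > 0, and every complex coupling factor η with nonzero imaginary part, the eigenvalue of the combined Neumann (Burton–Miller) operator on the unit sphere is nonzero: i·k²·h_n′(k)·(j_n(k) + η·k·j_n′(k)) ≠ 0. (This expresses the uniqueness of the Burton–Miller boundary integral formulation for the exterior Neumann problem on the unit sphere at all frequencies when Im η ≠ 0.) -/

import Mathlib

open Real Complex Filter Topology

/-- The Rayleigh operator `f ↦ (x⁻¹ d/dx) f`. -/
noncomputable def sphStep (f : ℝ → ℝ) : ℝ → ℝ := fun x => deriv f x / x

/-- Spherical Bessel function of the first kind: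
`j_n(x) = (−x)^n (x⁻¹ d/dx)^n (sin x / x)`. -/
noncomputable def sphj (n : ℕ) (x : ℝ) : ℝ :=
  (-x) ^ n * (sphStep^[n] (fun t => Real.sin t / t)) x

/-- Spherical Bessel function of the second kind:
`y_n(x) = −(−x)^n (x⁻¹ d/dx)^n (cos x / x)`. -/
noncomputable def sphy (n : ℕ) (x : ℝ) : ℝ :=
  -((-x) ^ n * (sphStep^[n] (fun t => Real.cos t / t)) x)

/-- Spherical Hankel function of the first kind: `h_n = j_n + i y_n`. -/
noncomputable def sphh (n : ℕ) (x : ℝ) : ℂ :=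
  (sphj n x : ℂ) + Complex.I * (sphy n x : ℂ)

/-- Derivative `j_n′`. -/
noncomputable def sphj' (n : ℕ) (x : ℝ) : ℝ := deriv (sphj n) x

/-- Derivative `y_n′`. -/
noncomputable def sphy' (n : ℕ) (x : ℝ) : ℝ := deriv (sphy n) x

/-- Derivative `h_n′`. -/
noncomputable def sphh' (n : ℕ) (x : ℝ) : ℂ := deriv (sphh n) x

section Aux
open Set
private lemma sphStep_smooth {f : ℝ → ℝ} (hf : ContDiffOn ℝ (⊤ : ℕ∞) f (Ioi 0)) :
    ContDiffOn ℝ (⊤ : ℕ∞) (sphStep f) (Ioi 0) := by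
  have hd : ContDiffOn ℝ (⊤ : ℕ∞) (deriv f) (Ioi 0) := hf.deriv_of_isOpen isOpen_Ioi (mod_cast le_top)
  exact hd.div contDiffOn_id (fun x hx => ne_of_gt hx)

private lemma diffAt_of_smooth {f : ℝ → ℝ} (hf : ContDiffOn ℝ (⊤ : ℕ∞) f (Ioi 0)) {x : ℝ}
    (hx : x ∈ Ioi (0:ℝ)) : DifferentiableAt ℝ f x :=
  (hf.differentiableOn (by simp)).differentiableAt (Ioi_mem_nhds hx)

private lemma deriv_sphStep {f : ℝ → ℝ} (hf : ContDiffOn ℝ (⊤ : ℕ∞) f (Ioi 0)) {x : ℝ}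
    (hx : x ∈ Ioi (0:ℝ)) :
    HasDerivAt (sphStep f)
      ((deriv (deriv f) x * x - deriv f x) / x ^ 2) x := by
  have h1 : HasDerivAt (deriv f) (deriv (deriv f) x) x :=
    (diffAt_of_smooth (hf.deriv_of_isOpen isOpen_Ioi (mod_cast le_top)) hx).hasDerivAt
  have := h1.fun_div (hasDerivAt_id x) (ne_of_gt hx)
  unfold sphStep; simpa using this

private lemma deriv2_sphStep {f : ℝ → ℝ} (hf : ContDiffOn ℝ (⊤ : ℕ∞) f (Ioi 0)) {x : ℝ}
    (hx : x ∈ Ioi (0:ℝ)) :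
    deriv (deriv (sphStep f)) x =
      ((deriv (deriv (deriv f)) x * x) * x ^ 2
        - (deriv (deriv f) x * x - deriv f x) * (2 * x)) / (x ^ 2) ^ 2 := by
  have hf1 : ContDiffOn ℝ (⊤ : ℕ∞) (deriv f) (Ioi 0) := hf.deriv_of_isOpen isOpen_Ioi (mod_cast le_top)
  have hf2 : ContDiffOn ℝ (⊤ : ℕ∞) (deriv (deriv f)) (Ioi 0) := hf1.deriv_of_isOpen isOpen_Ioi (mod_cast le_top)
  have he : deriv (sphStep f) =ᶠ[𝓝 x]
      fun y => (deriv (deriv f) y * y - deriv f y) / y ^ 2 := by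
    filter_upwards [Ioi_mem_nhds hx] with y hy
    exact (deriv_sphStep hf hy).deriv
  rw [he.deriv_eq]
  have hnum : HasDerivAt (fun y => deriv (deriv f) y * y - deriv f y)
      (deriv (deriv (deriv f)) x * x + deriv (deriv f) x * 1 - deriv (deriv f) x) x :=
    (((diffAt_of_smooth hf2 hx).hasDerivAt.mul (hasDerivAt_id x))).sub
      (diffAt_of_smooth hf1 hx).hasDerivAt
  have hden : HasDerivAt (fun y : ℝ => y ^ 2) (2 * x) x := by
    simpa using hasDerivAt_pow 2 x
  have := hnum.fun_div hden (pow_ne_zero 2 (ne_of_gt hx))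
  rw [this.deriv]; ring

private lemma sphStep_ode {f : ℝ → ℝ} {c : ℝ} (hf : ContDiffOn ℝ (⊤ : ℕ∞) f (Ioi 0))
    (hode : ∀ x ∈ Ioi (0:ℝ), x * deriv (deriv f) x + c * deriv f x + x * f x = 0) :
    ∀ x ∈ Ioi (0:ℝ), x * deriv (deriv (sphStep f)) x + (c + 2) * deriv (sphStep f) x
      + x * sphStep f x = 0 := by
  intro x hx
  have hx0 : x ≠ 0 := ne_of_gt hx
  have hf1 : ContDiffOn ℝ (⊤ : ℕ∞) (deriv f) (Ioi 0) := hf.deriv_of_isOpen isOpen_Ioi (mod_cast le_top)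
  have hf2 : ContDiffOn ℝ (⊤ : ℕ∞) (deriv (deriv f)) (Ioi 0) := hf1.deriv_of_isOpen isOpen_Ioi (mod_cast le_top)
  have hf3 : ContDiffOn ℝ (⊤ : ℕ∞) (deriv (deriv (deriv f))) (Ioi 0) := hf2.deriv_of_isOpen isOpen_Ioi (mod_cast le_top)
  have d1 : HasDerivAt f (deriv f x) x := (diffAt_of_smooth hf hx).hasDerivAt
  have d2 : HasDerivAt (deriv f) (deriv (deriv f) x) x := (diffAt_of_smooth hf1 hx).hasDerivAt
  have d3 : HasDerivAt (deriv (deriv f)) (deriv (deriv (deriv f)) x) x :=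
    (diffAt_of_smooth hf2 hx).hasDerivAt
  have hPhi : (fun y => y * deriv (deriv f) y + c * deriv f y + y * f y) =ᶠ[𝓝 x]
      (fun _ => (0:ℝ)) := by
    filter_upwards [Ioi_mem_nhds hx] with y hy
    exact hode y hy
  have hPhiD : HasDerivAt (fun y => y * deriv (deriv f) y + c * deriv f y + y * f y)
      ((1 * deriv (deriv f) x + x * deriv (deriv (deriv f)) x) + c * deriv (deriv f) x
        + (1 * f x + x * deriv f x)) x :=
    (((hasDerivAt_id x).mul d3).add (d2.const_mul c)).add ((hasDerivAt_id x).mul d1)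
  have h3 : (1 * deriv (deriv f) x + x * deriv (deriv (deriv f)) x) + c * deriv (deriv f) x
      + (1 * f x + x * deriv f x) = 0 := by
    have := hPhi.deriv_eq
    rw [hPhiD.deriv] at this
    simpa using this
  rw [deriv2_sphStep hf hx, (deriv_sphStep hf hx).deriv]
  show _ + _ + x * (deriv f x / x) = 0
  field_simp
  linear_combination x * h3 - (hode x hx)

private lemma base_deriv {s t : ℝ → ℝ} (h1 : ∀ y, HasDerivAt s (t y) y) {x : ℝ} (hx : x ≠ 0) :
    HasDerivAt (fun y => s y / y) ((t x * x - s x) / x ^ 2) x := by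
  simpa using (h1 x).fun_div (hasDerivAt_id x) hx

private lemma base_ode {s t : ℝ → ℝ} (h1 : ∀ y, HasDerivAt s (t y) y)
    (h2 : ∀ y, HasDerivAt t (-s y) y) :
    ∀ x ∈ Ioi (0:ℝ), x * deriv (deriv (fun y => s y / y)) x
      + 2 * deriv (fun y => s y / y) x + x * (s x / x) = 0 := by
  intro x hx
  have hx0 : x ≠ 0 := ne_of_gt hx
  have he : deriv (fun y => s y / y) =ᶠ[𝓝 x] fun y => (t y * y - s y) / y ^ 2 := by
    filter_upwards [Ioi_mem_nhds hx] with y hy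
    exact (base_deriv h1 (ne_of_gt hy)).deriv
  have hnum : HasDerivAt (fun y => t y * y - s y) ((-s x) * x + t x * 1 - t x) x :=
    ((h2 x).mul (hasDerivAt_id x)).sub (h1 x)
  have hden : HasDerivAt (fun y : ℝ => y ^ 2) (2 * x) x := by simpa using hasDerivAt_pow 2 x
  have h2nd := hnum.fun_div hden (pow_ne_zero 2 hx0)
  rw [he.deriv_eq, h2nd.deriv, (base_deriv h1 hx0).deriv]
  field_simp
  ring

private lemma iter_smooth_ode {f0 : ℝ → ℝ} (hs : ContDiffOn ℝ (⊤ : ℕ∞) f0 (Ioi 0))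
    (h0 : ∀ x ∈ Ioi (0:ℝ), x * deriv (deriv f0) x + 2 * deriv f0 x + x * f0 x = 0) (n : ℕ) :
    ContDiffOn ℝ (⊤ : ℕ∞) (sphStep^[n] f0) (Ioi 0) ∧
    ∀ x ∈ Ioi (0:ℝ), x * deriv (deriv (sphStep^[n] f0)) x
      + (2 * n + 2) * deriv (sphStep^[n] f0) x + x * (sphStep^[n] f0) x = 0 := by
  induction n with
  | zero => simpa using ⟨hs, h0⟩
  | succ m ih =>
    rw [Function.iterate_succ_apply']
    refine ⟨sphStep_smooth ih.1, fun x hx => ?_⟩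
    have h := sphStep_ode ih.1 ih.2 x hx
    have : ((2:ℝ) * (m:ℝ) + 2) + 2 = 2 * ((m:ℕ)+1:ℕ) + 2 := by push_cast; ring
    rw [this] at h
    exact h

private lemma hS1 : ∀ y, HasDerivAt Real.sin (Real.cos y) y := Real.hasDerivAt_sin
private lemma hS2 : ∀ y, HasDerivAt Real.cos (-Real.sin y) y := Real.hasDerivAt_cos
private lemma hC2 : ∀ y, HasDerivAt (fun t => -Real.sin t) (-Real.cos y) y :=
  fun y => (Real.hasDerivAt_sin y).neg

private lemma Ssmooth : ContDiffOn ℝ (⊤ : ℕ∞) (fun t => Real.sin t / t) (Ioi 0) :=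
  Real.contDiff_sin.contDiffOn.div contDiffOn_id (fun x hx => ne_of_gt hx)

private lemma Csmooth : ContDiffOn ℝ (⊤ : ℕ∞) (fun t => Real.cos t / t) (Ioi 0) :=
  Real.contDiff_cos.contDiffOn.div contDiffOn_id (fun x hx => ne_of_gt hx)

private lemma Sode : ∀ x ∈ Ioi (0:ℝ), x * deriv (deriv (fun t => Real.sin t / t)) x
    + 2 * deriv (fun t => Real.sin t / t) x + x * (Real.sin x / x) = 0 :=
  base_ode hS1 hS2

private lemma Code : ∀ x ∈ Ioi (0:ℝ), x * deriv (deriv (fun t => Real.cos t / t)) x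
    + 2 * deriv (fun t => Real.cos t / t) x + x * (Real.cos x / x) = 0 := by
  have := base_ode (s := Real.cos) (t := fun y => -Real.sin y) (fun y => Real.hasDerivAt_cos y) hC2
  simpa using this

private lemma wronskian_iter (n : ℕ) : ∀ x ∈ Ioi (0:ℝ),
    (sphStep^[n] (fun t => Real.sin t / t)) x * deriv (sphStep^[n] (fun t => Real.cos t / t)) x
      - deriv (sphStep^[n] (fun t => Real.sin t / t)) x
        * (sphStep^[n] (fun t => Real.cos t / t)) x
      = -(1 / x ^ (2 * n + 2)) := by
  induction n with
  | zero =>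
    intro x hx
    have hx0 : x ≠ 0 := ne_of_gt hx
    simp only [Function.iterate_zero, id]
    rw [(base_deriv hS1 hx0).deriv,
        (base_deriv (s := Real.cos) (t := fun y => -Real.sin y)
          (fun y => Real.hasDerivAt_cos y) hx0).deriv]
    have hpyth := Real.sin_sq_add_cos_sq x
    field_simp
    linear_combination (-(x^3)) * hpyth
  | succ m ih =>
    intro x hx
    have hx0 : x ≠ 0 := ne_of_gt hx
    obtain ⟨hFs, hFode⟩ := iter_smooth_ode Ssmooth Sode m
    obtain ⟨hGs, hGode⟩ := iter_smooth_ode Csmooth Code m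
    rw [Function.iterate_succ_apply', Function.iterate_succ_apply',
        (deriv_sphStep hFs hx).deriv, (deriv_sphStep hGs hx).deriv]
    simp only [sphStep]
    have hA := hFode x hx
    have hB := hGode x hx
    have hV' : x ^ (2*m+2) * ((sphStep^[m] (fun t => Real.sin t / t)) x
        * deriv (sphStep^[m] (fun t => Real.cos t / t)) x
        - deriv (sphStep^[m] (fun t => Real.sin t / t)) x
          * (sphStep^[m] (fun t => Real.cos t / t)) x) = -1 := by
      rw [ih x hx]
      field_simp
    have hpow : x ^ (2*(m+1)+2) = x ^ (2*m+2) * x^2 := by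
      rw [show 2*(m+1)+2 = (2*m+2)+2 by ring, pow_add]
    rw [hpow]
    have hp : x ^ (2*m+2) ≠ 0 := pow_ne_zero _ hx0
    field_simp
    linear_combination
      ((x^(2*m+2) * x^2 + (x^2-x^4)*x^(2*m)) * deriv (sphStep^[m] (fun t => Real.sin t / t)) x) * hB
      - ((x^(2*m+2) * x^2 + (x^2-x^4)*x^(2*m)) * deriv (sphStep^[m] (fun t => Real.cos t / t)) x) * hA
      + (x^3 + x - x^3) * hV'

private lemma hasDerivAt_neg_pow (n : ℕ) (x : ℝ) :
    HasDerivAt (fun y : ℝ => (-y) ^ n) ((n : ℝ) * (-x) ^ (n - 1) * (-1)) x := by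
  simpa [Function.comp_def] using (hasDerivAt_pow n (-x)).comp x (hasDerivAt_neg x)

private lemma hasDerivAt_sphj (n : ℕ) {x : ℝ} (hx : 0 < x) :
    HasDerivAt (sphj n)
      ((n : ℝ) * (-x) ^ (n - 1) * (-1) * (sphStep^[n] (fun t => Real.sin t / t)) x
        + (-x) ^ n * deriv (sphStep^[n] (fun t => Real.sin t / t)) x) x := by
  have hFs := (iter_smooth_ode Ssmooth Sode n).1
  exact (hasDerivAt_neg_pow n x).mul (diffAt_of_smooth hFs hx).hasDerivAt

private lemma hasDerivAt_sphy (n : ℕ) {x : ℝ} (hx : 0 < x) :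
    HasDerivAt (sphy n)
      (-((n : ℝ) * (-x) ^ (n - 1) * (-1) * (sphStep^[n] (fun t => Real.cos t / t)) x
        + (-x) ^ n * deriv (sphStep^[n] (fun t => Real.cos t / t)) x)) x := by
  have hGs := (iter_smooth_ode Csmooth Code n).1
  exact ((hasDerivAt_neg_pow n x).mul (diffAt_of_smooth hGs hx).hasDerivAt).neg

private lemma wronskian_jy (n : ℕ) {x : ℝ} (hx : 0 < x) :
    sphj n x * sphy' n x - sphj' n x * sphy n x = 1 / x ^ 2 := by
  have hx0 : x ≠ 0 := ne_of_gt hx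
  have hj := hasDerivAt_sphj n hx
  have hy := hasDerivAt_sphy n hx
  rw [sphj', sphy', hj.deriv, hy.deriv, sphj, sphy]
  have hW' : x ^ (2*n+2) * ((sphStep^[n] (fun t => Real.sin t / t)) x
      * deriv (sphStep^[n] (fun t => Real.cos t / t)) x
      - deriv (sphStep^[n] (fun t => Real.sin t / t)) x
        * (sphStep^[n] (fun t => Real.cos t / t)) x) = -1 := by
    rw [wronskian_iter n x hx]
    field_simp
  have hP : (-x) ^ n * (-x) ^ n = x ^ (2 * n) := by
    rw [← mul_pow, neg_mul_neg, ← sq, ← pow_mul, mul_comm 2 n, mul_comm n 2]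
  have hpow : x ^ (2*n+2) = x ^ (2*n) * x ^ 2 := pow_add x (2*n) 2
  rw [hpow] at hW'
  field_simp
  linear_combination (x ^ 2 * (deriv (sphStep^[n] (fun t => Real.sin t / t)) x
      * (sphStep^[n] (fun t => Real.cos t / t)) x
      - (sphStep^[n] (fun t => Real.sin t / t)) x
        * deriv (sphStep^[n] (fun t => Real.cos t / t)) x)) * hP - hW'

private lemma sphh'_eq (n : ℕ) {x : ℝ} (hx : 0 < x) :
    sphh' n x = (sphj' n x : ℂ) + Complex.I * (sphy' n x : ℂ) := by
  have hj : HasDerivAt (sphj n) (sphj' n x) x :=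
    (hasDerivAt_sphj n hx).differentiableAt.hasDerivAt
  have hy : HasDerivAt (sphy n) (sphy' n x) x :=
    (hasDerivAt_sphy n hx).differentiableAt.hasDerivAt
  have h : HasDerivAt (sphh n) ((sphj' n x : ℂ) + Complex.I * (sphy' n x : ℂ)) x :=
    hj.ofReal_comp.add (hy.ofReal_comp.const_mul Complex.I)
  rw [sphh', h.deriv]

end Aux

/-- For Im η ≠ 0 the Burton–Miller Neumann eigenvalue on the unit sphere,
λ_n(N) = i·k²·h_n′(k)·(j_n(k) + η·k·j_n′(k)), is nonzero at all wavenumbers. -/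
theorem neumann_BM_eigenvalue_ne_zero (n : ℕ) (k : ℝ) (hk : 0 < k) (η : ℂ)
    (hη : η.im ≠ 0) :
    Complex.I * (k : ℂ) ^ 2 * sphh' n k *
      ((sphj n k : ℂ) + η * (k : ℂ) * (sphj' n k : ℂ)) ≠ 0 := by
  have hk0 : k ≠ 0 := ne_of_gt hk
  have hW := wronskian_jy n hk
  have hWne : sphj n k * sphy' n k - sphj' n k * sphy n k ≠ 0 := by
    rw [hW]; positivity
  have h1 : sphh' n k ≠ 0 := by
    rw [sphh'_eq n hk]
    intro h
    rw [Complex.ext_iff] at h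
    simp [Complex.add_im, Complex.add_re] at h
    obtain ⟨hj0, hy0⟩ := h
    apply hWne
    rw [hj0, hy0]; ring
  have h2 : (sphj n k : ℂ) + η * (k : ℂ) * (sphj' n k : ℂ) ≠ 0 := by
    intro h
    rw [Complex.ext_iff] at h
    simp [Complex.add_im, Complex.add_re, Complex.mul_im, Complex.mul_re] at h
    obtain ⟨hre, him⟩ := h
    have hj'0 : sphj' n k = 0 := by
      rcases him with (h | h) | h
      · exact absurd h hη
      · exact absurd h hk0
      · exact h
    have hj0 : sphj n k = 0 := by
      rw [hj'0] at hre; simpa using hre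
    apply hWne
    rw [hj0, hj'0]; ring
  exact mul_ne_zero (mul_ne_zero (mul_ne_zero Complex.I_ne_zero (by
    simpa using pow_ne_zero 2 (Complex.ofReal_ne_zero.2 hk0))) h1) h2
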